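/- Let N > 2 and 0 ≤ M ≤ N be integers. Then ∑_{h=0}^{M} r_PT(N,h) = ∑_{n≤N} Λ(n)ψ(n+M) + ∑_{n≤N} Λ(n)ψ(n) − ψ(N)². -/

import Mathlib

open Complex Filter Topology Finset

noncomputable section

/-- The Chebyshev psi function `ψ(x) = ∑_{n ≤ x} Λ(n)`. -/
def chebyshevPsi (x : ℝ) : ℝ := ∑ n ∈ Finset.Iic ⌊x⌋₊, ArithmeticFunction.vonMangoldt n

/-- The Goldbach counting function `r_G(n) = ∑_{m₁+m₂=n} Λ(m₁)Λ(m₂)`. -/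
def rG (n : ℕ) : ℝ := ∑ m ∈ Finset.range (n + 1),
  ArithmeticFunction.vonMangoldt m * ArithmeticFunction.vonMangoldt (n - m)

/-- The prime-tuples counting function `r_PT(N,h) = ∑_{n=0}^N Λ(n)Λ(n+h)`. -/
def rPT (N h : ℕ) : ℝ := ∑ n ∈ Finset.range (N + 1),
  ArithmeticFunction.vonMangoldt n * ArithmeticFunction.vonMangoldt (n + h)

/-- `ρ` is a nontrivial zero of the Riemann zeta function. -/
def IsNontrivialZero (ρ : ℂ) : Prop := riemannZeta ρ = 0 ∧ 0 < ρ.re ∧ ρ.re < 1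

-- The multiplicity of `ρ` as a zero of the Riemann zeta function.
open Classical in
def zeroMult (ρ : ℂ) : ℕ :=
  if h : AnalyticAt ℂ riemannZeta ρ then (analyticOrderAt riemannZeta ρ).toNat else 0

/-- The finite sum `∑_{ρ : |Im ρ| ≤ T} f(ρ)` over nontrivial zeros of `ζ`,
counted with multiplicity. -/
def zeroSumUpto (T : ℝ) (f : ℂ → ℂ) : ℂ :=
  ∑ᶠ ρ ∈ {ρ : ℂ | IsNontrivialZero ρ ∧ |ρ.im| ≤ T}, (zeroMult ρ : ℂ) * f ρ

/-- The series `∑_ρ f(ρ)` over the nontrivial zeros of `ζ`, understood as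
`lim_{T→∞} ∑_{ρ : |Im ρ| ≤ T} f(ρ)`, converges to `L`. -/
def ZeroSumTendsto (f : ℂ → ℂ) (L : ℂ) : Prop :=
  Filter.Tendsto (fun T : ℝ => zeroSumUpto T f) Filter.atTop (nhds L)

/-- Absolute convergence of a series over the nontrivial zeros of `ζ`
(with multiplicity). -/
def ZeroAbsSummable (f : ℂ → ℂ) : Prop :=
  Summable (fun ρ : {ρ : ℂ // IsNontrivialZero ρ} => (zeroMult ρ : ℝ) * ‖f ρ‖)

/-- The incomplete Beta function `B_z(a,b) = ∫_0^z t^(a-1) (1-t)^(b-1) dt`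
(extended to negative real `z` by the same integral). -/
def incBeta (z : ℝ) (a b : ℂ) : ℂ :=
  ∫ t in (0:ℝ)..z, (t : ℂ) ^ (a - 1) * ((1 : ℂ) - (t : ℂ)) ^ (b - 1)

/-- The logarithmic derivative of the Riemann zeta function. -/
def zetaLogDeriv (s : ℂ) : ℂ := deriv riemannZeta s / riemannZeta s

/-
Write `S k = ∑_{m < k} Λ(m)`, so that `ψ(n) = S(n+1)`. Summing over `h ≤ M` telescopes the inner
variable of `r_PT`: `∑_{h ≤ M} r_PT(N,h) = ∑_{n ≤ N} Λ(n) (S(n+M+1) - S(n))`. Splitting the square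
`S(N+1)² = ∑_{n ≤ N} Λ(n) (S(n) + S(n+1))` along the diagonal gives
`∑_{n ≤ N} Λ(n) S(n) = ψ(N)² - ∑_{n ≤ N} Λ(n) ψ(n)`.
-/

section PartialSums

variable {R : Type*}

lemma sum_range_sum_mul_add_eq_sum_mul_sub [CommRing R] (f g : ℕ → R) (s : Finset ℕ) (K : ℕ) :
    ∑ h ∈ range K, ∑ n ∈ s, f n * g (n + h) =
      ∑ n ∈ s, f n * (∑ m ∈ range (n + K), g m - ∑ m ∈ range n, g m) := by
  rw [sum_comm]
  refine sum_congr rfl fun n _ => ?_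
  rw [← mul_sum, sum_range_add_sub_sum_range]

lemma sq_sum_range_eq_sum_mul_add [CommSemiring R] (f : ℕ → R) (K : ℕ) :
    (∑ m ∈ range K, f m) ^ 2 =
      ∑ n ∈ range K, f n * (∑ m ∈ range n, f m + ∑ m ∈ range (n + 1), f m) := by
  induction K with
  | zero => simp
  | succ K ih =>
    rw [sum_range_succ, add_sq, ih, sum_range_succ _ K, sum_range_succ f K]
    ring

end PartialSums

lemma chebyshevPsi_natCast (n : ℕ) :
    chebyshevPsi n = ∑ m ∈ range (n + 1), ArithmeticFunction.vonMangoldt m := by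
  rw [chebyshevPsi, Nat.floor_natCast, Nat.range_succ_eq_Iic]

theorem sum_rPT_eq_general (N M : ℕ) :
    ∑ h ∈ Finset.range (M + 1), rPT N h =
      (∑ n ∈ Finset.Iic N, ArithmeticFunction.vonMangoldt n *
          chebyshevPsi ((n + M : ℕ) : ℝ)) +
        (∑ n ∈ Finset.Iic N, ArithmeticFunction.vonMangoldt n *
          chebyshevPsi ((n : ℕ) : ℝ)) -
        (chebyshevPsi (N : ℝ)) ^ 2 := by
  simp only [rPT, chebyshevPsi_natCast, ← Nat.range_succ_eq_Iic]
  rw [sum_range_sum_mul_add_eq_sum_mul_sub, sq_sum_range_eq_sum_mul_add]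
  simp only [← add_assoc, mul_sub, mul_add, sum_sub_distrib, sum_add_distrib]
  ring

/-- basic identity for the average of prime-tuples
representations. -/
theorem sum_rPT_eq (N M : ℕ) (hN : 2 < N) (hM : M ≤ N) :
    ∑ h ∈ Finset.range (M + 1), rPT N h =
      (∑ n ∈ Finset.Iic N, ArithmeticFunction.vonMangoldt n *
          chebyshevPsi ((n + M : ℕ) : ℝ)) +
        (∑ n ∈ Finset.Iic N, ArithmeticFunction.vonMangoldt n *
          chebyshevPsi ((n : ℕ) : ℝ)) -
        (chebyshevPsi (N : ℝ)) ^ 2 :=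
  sum_rPT_eq_general N M

end
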